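/- Let V be a finite-dimensional complex vector space, A, B alternating bilinear forms on V, and let rk 𝓛 := max_{λ ∈ ℂ ∪ {∞}} rank(A + λB) with rank at λ = ∞ meaning rank B. Let K ⊆ V be the core subspace, i.e., the span of the union of the kernels Ker(A + λB) := {v : (A+λB)(v, w) = 0 ∀w ∈ V} over all regular λ ∈ ℂ ∪ {∞} (those with rank(A + λB) = rk 𝓛). Let U ⊆ V be a bi-isotropic admissible subspace with common orthogonal W such that K ⊆ U. Then for every regular λ ∈ ℂ ∪ {∞}, the radical of the restriction of A + λB to W equals U; that is, {w ∈ W : (A + λB)(w, w') = 0 for all w' ∈ W} = U. In particular, the pencil induced on W/U is nondegenerate at every regular λ. -/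

import Mathlib

open Module LinearMap

variable {V : Type*} [AddCommGroup V] [Module ℂ V]

/-- The skew-orthogonal complement of a subspace `U` with respect to a
bilinear form `C`. -/
noncomputable def orthComp (C : V →ₗ[ℂ] V →ₗ[ℂ] ℂ) (U : Submodule ℂ V) : Submodule ℂ V :=
  ⨅ u ∈ U, LinearMap.ker (C u)

/-- The rank of a bilinear form: the rank of the induced map `V → V*`. -/
noncomputable def formRank (C : V →ₗ[ℂ] V →ₗ[ℂ] ℂ) : ℕ :=
  Module.finrank ℂ (LinearMap.range C)

/-- The member of the pencil `{A + λB : λ ∈ ℂ ∪ {∞}}` at `λ`; `none` is `λ = ∞`,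
where the form is `B`. -/
noncomputable def pencilForm (A B : V →ₗ[ℂ] V →ₗ[ℂ] ℂ) : Option ℂ → V →ₗ[ℂ] V →ₗ[ℂ] ℂ
  | none => B
  | some l => A + l • B

/-- The rank of the pencil: `max_{λ ∈ ℂ ∪ {∞}} rank (A + λB)`. -/
noncomputable def pencilRank (A B : V →ₗ[ℂ] V →ₗ[ℂ] ℂ) : ℕ :=
  ⨆ l : Option ℂ, formRank (pencilForm A B l)

/-- The core subspace: the span of the union of kernels `Ker (A + λB)` over
all regular `λ ∈ ℂ ∪ {∞}` (those with `rank (A + λB) = rk 𝓛`). Note that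
`Ker (A + λB) = {v : (A + λB)(v, w) = 0 ∀ w}` is the kernel of the induced map
`V → V*`. -/
noncomputable def coreSubspace (A B : V →ₗ[ℂ] V →ₗ[ℂ] ℂ) : Submodule ℂ V :=
  ⨆ l ∈ {l : Option ℂ | formRank (pencilForm A B l) = pencilRank A B},
    LinearMap.ker (pencilForm A B l)

/-!
For all but finitely many `λ ∈ ℂ` the form `A + λB` is regular (a nonzero minor of a regular
member is a polynomial in `λ` that is not identically zero) and `U^⊥ = W`; fix such a `μ`.
Two distinct such `λ` show that `U ⊥ W` for `A` and `B` separately, so `U` lies in the radical of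
every member of the pencil on `W`. Kernels of regular members lie in `K ⊆ U ⊆ W` and all have
dimension `dim V - rk 𝓛`, so `dim W = dim V - dim U + dim Ker (A + μB)` and then, for every
regular `λ`, `dim W^⊥ = dim V - dim W + dim Ker (A + λB) = dim U`; hence `W^⊥ = U`.
-/

section Biorthogonal

variable {K E ι : Type*} [Field K] [AddCommGroup E] [Module K E] [Fintype ι] [DecidableEq ι]

lemma LinearIndependent.exists_pairing_matrix_eq_one {φ : ι → Module.Dual K E}
    (hφ : LinearIndependent K φ) : ∃ w : ι → E, Matrix.of (fun i j => φ i (w j)) = 1 := by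
  have hsurj : Function.Surjective (LinearMap.pi φ) := by
    have hspan := span_flip_eq_top_iff_linearIndependent.2
      (hφ.map' (LinearMap.ltoFun K E K K) (LinearMap.ker_eq_bot.2 DFunLike.coe_injective))
    rw [← LinearMap.range_eq_top, ← hspan]
    exact (Submodule.span_eq _).symm
  refine ⟨fun j => Function.surjInv hsurj (Pi.single j 1), ?_⟩
  ext i j
  simpa [Matrix.one_apply, Pi.single_apply] using
    congrFun (Function.surjInv_eq hsurj (Pi.single j (1 : K))) i

end Biorthogonal

section FormRank

variable [FiniteDimensional ℂ V]

lemma exists_det_ne_zero_of_formRank (C : V →ₗ[ℂ] V →ₗ[ℂ] ℂ) :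
    ∃ v w : Fin (formRank C) → V, (Matrix.of fun i j => C (v i) (w j)).det ≠ 0 := by
  let b := Module.finBasis ℂ (LinearMap.range C)
  choose v hv using fun i => LinearMap.mem_range.1 (b i).2
  have hind : LinearIndependent ℂ (C ∘ v) := by
    have : C ∘ v = (LinearMap.range C).subtype ∘ b := funext hv
    rw [this]
    exact b.linearIndependent.map' _ (Submodule.ker_subtype _)
  obtain ⟨w, hw⟩ := hind.exists_pairing_matrix_eq_one
  have hdet := congrArg Matrix.det hw
  rw [Matrix.det_one] at hdet
  exact ⟨v, w, fun h => one_ne_zero (hdet.symm.trans h)⟩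

lemma le_formRank_of_det_ne_zero {k : ℕ} (C : V →ₗ[ℂ] V →ₗ[ℂ] ℂ) (v w : Fin k → V)
    (h : (Matrix.of fun i j => C (v i) (w j)).det ≠ 0) : k ≤ formRank C := by
  have hind : LinearIndependent ℂ (C ∘ v) :=
    LinearIndependent.of_comp (LinearMap.pi fun j => Module.Dual.eval ℂ V (w j))
      (Matrix.linearIndependent_rows_of_det_ne_zero h)
  calc k = finrank ℂ (Submodule.span ℂ (Set.range (C ∘ v))) := by
        rw [finrank_span_eq_card hind, Fintype.card_fin]
    _ ≤ formRank C :=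
        Submodule.finrank_mono (Submodule.span_le.2 (Set.range_comp_subset_range v C))

open Polynomial in
lemma finite_setOf_formRank_lt (A B : V →ₗ[ℂ] V →ₗ[ℂ] ℂ) (l₀ : Option ℂ) :
    {l : ℂ | formRank (A + l • B) < formRank (pencilForm A B l₀)}.Finite := by
  obtain ⟨v, w, hvw⟩ := exists_det_ne_zero_of_formRank (pencilForm A B l₀)
  set MA := Matrix.of fun i j => A (v i) (w j)
  set MB := Matrix.of fun i j => B (v i) (w j)
  set p := ((X : ℂ[X]) • MB.map C + MA.map C).det
  have heval : ∀ l : ℂ, p.eval l = (Matrix.of fun i j => (A + l • B) (v i) (w j)).det := by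
    intro l
    rw [← coe_evalRingHom, RingHom.map_det]
    congr 1
    ext i j
    simp only [RingHom.mapMatrix_apply, Matrix.map_apply, Matrix.add_apply, Matrix.smul_apply,
      Matrix.of_apply, coe_evalRingHom, eval_add, eval_mul, eval_X, eval_C, smul_eq_mul,
      LinearMap.add_apply, LinearMap.smul_apply, MA, MB]
    ring
  -- at `l₀ = μ` the polynomial evaluates to the chosen nonzero minor; at `l₀ = ∞` that minor
  -- is its coefficient of degree `formRank B`
  have hp : p ≠ 0 := by
    cases l₀ with
    | none =>
      intro h
      have : p.coeff _ = MB.det := coeff_det_X_add_C_card MB MA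
      rw [h, coeff_zero] at this
      exact hvw this.symm
    | some μ =>
      intro h
      have := heval μ
      rw [h, eval_zero] at this
      exact hvw this.symm
  refine (finite_setOfPred_isRoot hp).subset fun l hl => ?_
  by_contra hroot
  rw [Set.mem_ofPred_eq, IsRoot.def, heval] at hroot
  exact (le_formRank_of_det_ne_zero _ v w hroot).not_gt hl

lemma bddAbove_range_formRank_pencilForm (A B : V →ₗ[ℂ] V →ₗ[ℂ] ℂ) :
    BddAbove (Set.range fun l => formRank (pencilForm A B l)) :=
  ⟨finrank ℂ (Module.Dual ℂ V), by rintro _ ⟨l, rfl⟩; exact Submodule.finrank_le _⟩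

lemma formRank_le_pencilRank (A B : V →ₗ[ℂ] V →ₗ[ℂ] ℂ) (l : Option ℂ) :
    formRank (pencilForm A B l) ≤ pencilRank A B :=
  le_ciSup (bddAbove_range_formRank_pencilForm A B) l

lemma exists_formRank_eq_pencilRank (A B : V →ₗ[ℂ] V →ₗ[ℂ] ℂ) :
    ∃ l, formRank (pencilForm A B l) = pencilRank A B :=
  Nat.sSup_mem (Set.range_nonempty _) (bddAbove_range_formRank_pencilForm A B)

lemma finite_setOf_formRank_ne_pencilRank (A B : V →ₗ[ℂ] V →ₗ[ℂ] ℂ) :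
    {l : ℂ | formRank (A + l • B) ≠ pencilRank A B}.Finite := by
  obtain ⟨l₀, hl₀⟩ := exists_formRank_eq_pencilRank A B
  refine (finite_setOf_formRank_lt A B l₀).subset fun l hl => ?_
  rw [Set.mem_ofPred_eq, hl₀]
  exact (formRank_le_pencilRank A B (some l)).lt_of_ne hl

end FormRank

section OrthComp

lemma mem_orthComp {C : V →ₗ[ℂ] V →ₗ[ℂ] ℂ} {S : Submodule ℂ V} {v : V} :
    v ∈ orthComp C S ↔ ∀ u ∈ S, C u v = 0 := by
  simp [orthComp]

lemma mem_orthComp_iff_of_isAlt {C : V →ₗ[ℂ] V →ₗ[ℂ] ℂ} (hC : C.IsAlt) {S : Submodule ℂ V}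
    {v : V} : v ∈ orthComp C S ↔ ∀ u ∈ S, C v u = 0 := by
  simp only [mem_orthComp, ← hC.neg v, neg_eq_zero]

lemma finrank_orthComp_add_finrank [FiniteDimensional ℂ V] (C : V →ₗ[ℂ] V →ₗ[ℂ] ℂ)
    (S : Submodule ℂ V) :
    finrank ℂ (orthComp C S) + finrank ℂ S = finrank ℂ V + finrank ℂ ↥(S ⊓ LinearMap.ker C) := by
  have horth : orthComp C S = (S.map C).dualCoannihilator := by
    ext v
    simp [mem_orthComp, Submodule.mem_dualCoannihilator]
  have hdual : finrank ℂ (LinearMap.range (C.domRestrict S)) + finrank ℂ (orthComp C S)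
      = finrank ℂ V := by
    rw [horth, LinearMap.range_domRestrict]
    exact Subspace.finrank_add_finrank_dualCoannihilator_eq _
  have hrank := LinearMap.finrank_range_add_finrank_ker (C.domRestrict S)
  rw [LinearMap.ker_domRestrict, ← Submodule.finrank_map_subtype_eq,
    Submodule.map_comap_subtype] at hrank
  omega

lemma le_orthComp_comm_of_isAlt {C : V →ₗ[ℂ] V →ₗ[ℂ] ℂ} (hC : C.IsAlt) {S T : Submodule ℂ V} :
    S ≤ orthComp C T ↔ T ≤ orthComp C S := by
  constructor <;>
  · intro h t ht
    exact (mem_orthComp_iff_of_isAlt hC).2 fun s hs => mem_orthComp.1 (h hs) t ht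

lemma orthComp_orthComp_eq [FiniteDimensional ℂ V] {C D : V →ₗ[ℂ] V →ₗ[ℂ] ℂ}
    {U : Submodule ℂ V} (hD : LinearMap.ker D ≤ U) (hC : LinearMap.ker C ≤ orthComp D U)
    (hle : U ≤ orthComp C (orthComp D U)) (hrank : formRank C = formRank D) :
    orthComp C (orthComp D U) = U := by
  have hU := finrank_orthComp_add_finrank D U
  have hT := finrank_orthComp_add_finrank C (orthComp D U)
  rw [inf_eq_right.2 hD] at hU
  rw [inf_eq_right.2 hC] at hT
  have hCV := LinearMap.finrank_range_add_finrank_ker C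
  have hDV := LinearMap.finrank_range_add_finrank_ker D
  unfold formRank at hrank
  exact (Submodule.eq_of_le_of_finrank_le hle (by omega)).symm

end OrthComp

section Pencil

variable {A B : V →ₗ[ℂ] V →ₗ[ℂ] ℂ}

lemma pencilForm_isAlt (hA : A.IsAlt) (hB : B.IsAlt) (l : Option ℂ) :
    (pencilForm A B l).IsAlt := by
  cases l with
  | none => exact hB
  | some μ => intro x; simp [pencilForm, hA x, hB x]

lemma mem_orthComp_pencilForm_of_ne {U : Submodule ℂ V} {v : V} {l₁ l₂ : ℂ} (hne : l₁ ≠ l₂)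
    (h₁ : v ∈ orthComp (A + l₁ • B) U) (h₂ : v ∈ orthComp (A + l₂ • B) U) (l : Option ℂ) :
    v ∈ orthComp (pencilForm A B l) U := by
  refine mem_orthComp.2 fun u hu => ?_
  have e₁ : A u v + l₁ * B u v = 0 := by simpa using mem_orthComp.1 h₁ u hu
  have e₂ : A u v + l₂ * B u v = 0 := by simpa using mem_orthComp.1 h₂ u hu
  have hB : B u v = 0 :=
    (mul_eq_zero.1 (by linear_combination e₁ - e₂)).resolve_left (sub_ne_zero.2 hne)
  have hA : A u v = 0 := by simpa [hB] using e₁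
  cases l <;> simp [pencilForm, hA, hB]

lemma ker_pencilForm_le_coreSubspace {l : Option ℂ}
    (hl : formRank (pencilForm A B l) = pencilRank A B) :
    LinearMap.ker (pencilForm A B l) ≤ coreSubspace A B :=
  le_iSup₂_of_le (f := fun l (_ : formRank (pencilForm A B l) = pencilRank A B) =>
    LinearMap.ker (pencilForm A B l)) l hl le_rfl

end Pencil

lemma Submodule.Quotient.eq_zero_of_forall_form_eq_zero {C : V →ₗ[ℂ] V →ₗ[ℂ] ℂ}
    {U W : Submodule ℂ V} (hrad : ∀ w ∈ W, (∀ w' ∈ W, C w w' = 0) → w ∈ U)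
    {C' : (W ⧸ U.comap W.subtype) →ₗ[ℂ] (W ⧸ U.comap W.subtype) →ₗ[ℂ] ℂ}
    (hC' : ∀ x y : W, C' (Submodule.Quotient.mk x) (Submodule.Quotient.mk y) = C x y)
    {q : W ⧸ U.comap W.subtype} (hq : ∀ q', C' q q' = 0) : q = 0 := by
  obtain ⟨x, rfl⟩ := Submodule.Quotient.mk_surjective _ q
  rw [Submodule.Quotient.mk_eq_zero]
  exact hrad x x.2 fun w' hw' => (hC' x ⟨w', hw'⟩).symm.trans (hq _)

/-- Let `U` be a bi-isotropic admissible subspace with common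
orthogonal `W` containing the core subspace `K ⊆ U`. Then for every regular
`λ ∈ ℂ ∪ {∞}`, the radical of the restriction of `A + λB` to `W` equals `U`;
in particular, any form induced on `W/U` by a regular member of the pencil is
nondegenerate. -/
theorem statement_8 [FiniteDimensional ℂ V]
    (A B : V →ₗ[ℂ] V →ₗ[ℂ] ℂ) (hAalt : A.IsAlt) (hBalt : B.IsAlt)
    (U W : Submodule ℂ V)
    (hbiiso : ∀ u ∈ U, ∀ v ∈ U, A u v = 0 ∧ B u v = 0)
    (hadm : {l : ℂ | orthComp (A + l • B) U ≠ W}.Finite)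
    (hcore : coreSubspace A B ≤ U) :
    (∀ l : Option ℂ, formRank (pencilForm A B l) = pencilRank A B →
      {w : V | w ∈ W ∧ ∀ w' ∈ W, pencilForm A B l w w' = 0} = (U : Set V)) ∧
    (∀ l : Option ℂ, formRank (pencilForm A B l) = pencilRank A B →
      ∀ C' : (W ⧸ U.comap W.subtype) →ₗ[ℂ] (W ⧸ U.comap W.subtype) →ₗ[ℂ] ℂ,
        (∀ x y : W, C' (Submodule.Quotient.mk x) (Submodule.Quotient.mk y)
          = pencilForm A B l (x : V) (y : V)) →
        ∀ q : W ⧸ U.comap W.subtype, (∀ q', C' q q' = 0) → q = 0) := by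
  obtain ⟨μ, hμW, hμ⟩ : ∃ μ : ℂ, orthComp (A + μ • B) U = W ∧
      formRank (A + μ • B) = pencilRank A B := by
    obtain ⟨μ, hμ⟩ := (hadm.union (finite_setOf_formRank_ne_pencilRank A B)).infinite_compl.nonempty
    exact ⟨μ, by simpa using hμ⟩
  obtain ⟨l₁, hl₁, l₂, hl₂, hne⟩ := hadm.infinite_compl.nontrivial
  simp only [Set.mem_compl_iff, Set.mem_ofPred_eq, not_not] at hl₁ hl₂
  have hW : ∀ l, W ≤ orthComp (pencilForm A B l) U := fun l v hv =>
    mem_orthComp_pencilForm_of_ne hne (hl₁ ▸ hv) (hl₂ ▸ hv) l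
  have hUW : U ≤ W := hμW ▸ fun u hu => mem_orthComp.2 fun u' hu' => by
    simp [(hbiiso u' hu' u hu).1, (hbiiso u' hu' u hu).2]
  have hradical : ∀ l, formRank (pencilForm A B l) = pencilRank A B →
      {w : V | w ∈ W ∧ ∀ w' ∈ W, pencilForm A B l w w' = 0} = (U : Set V) := by
    intro l hl
    have hC := pencilForm_isAlt hAalt hBalt l
    have horth : orthComp (pencilForm A B l) W = U := by
      subst hμW
      exact orthComp_orthComp_eq ((ker_pencilForm_le_coreSubspace (l := some μ) hμ).trans hcore)
        ((ker_pencilForm_le_coreSubspace hl).trans (hcore.trans hUW))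
        ((le_orthComp_comm_of_isAlt hC).2 (hW l)) (hl.trans hμ.symm)
    ext v
    simp only [Set.mem_ofPred_eq, ← mem_orthComp_iff_of_isAlt hC, horth, SetLike.mem_coe]
    exact ⟨And.right, fun hv => ⟨hUW hv, hv⟩⟩
  exact ⟨hradical, fun l hl C' hC' q hq =>
    Submodule.Quotient.eq_zero_of_forall_form_eq_zero
      (fun w hw hw' => (hradical l hl).subset ⟨hw, hw'⟩) hC' hq⟩
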